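/- For each n ≥ 3, with A_n the n×n Jordan nilpotent block and B_n the n×n matrix with sole nonzero entry 1 at position (n,1), the matrix A_n^{n−2}(A_n B_n − B_n A_n) equals the diagonal matrix diag(1, −1, 0, …, 0); in particular it has eigenvalues 1 and −1 and nonzero spectrum. -/
import Mathlib

def jordanBlock (n : ℕ) : Matrix (Fin n) (Fin n) ℂ :=
  Matrix.of fun i j => if (i : ℕ) + 1 = (j : ℕ) then 1 else 0

def cornerMatrix (n : ℕ) : Matrix (Fin n) (Fin n) ℂ :=
  Matrix.of fun i j => if (i : ℕ) = n - 1 ∧ (j : ℕ) = 0 then 1 else 0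

lemma jordanBlock_pow_apply (n k : ℕ) (i j : Fin n) :
    ((jordanBlock n) ^ k) i j = if (i : ℕ) + k = (j : ℕ) then 1 else 0 := by
  induction k generalizing j with
  | zero =>
    simp [Matrix.one_apply, Fin.ext_iff]
  | succ k ih =>
    rw [pow_succ, Matrix.mul_apply]
    have key : ∀ b : Fin n, (jordanBlock n ^ k) i b * jordanBlock n b j
        = if ((i:ℕ) + k = (b:ℕ) ∧ (b:ℕ) + 1 = (j:ℕ)) then 1 else 0 := by
      intro b
      rw [ih]
      simp only [jordanBlock, Matrix.of_apply]
      split_ifs with h1 h2 h3 <;> simp_all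
    simp only [key]
    by_cases hj : (i:ℕ) + (k + 1) = (j:ℕ)
    · have hb : (i:ℕ) + k < n := by omega
      rw [if_pos hj, Finset.sum_eq_single (⟨(i:ℕ)+k, hb⟩ : Fin n)]
      · rw [if_pos ⟨rfl, by simpa using by omega⟩]
      · intro b _ hbne
        rw [if_neg]
        rintro ⟨h1, -⟩
        exact hbne (Fin.ext h1.symm)
      · simp
    · rw [if_neg hj, Finset.sum_eq_zero]
      intro b _
      rw [if_neg (by omega)]

lemma comm_apply (n : ℕ) (hn : 3 ≤ n) (i j : Fin n) :
    (jordanBlock n * cornerMatrix n - cornerMatrix n * jordanBlock n) i j =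
      if ((i:ℕ) = n - 2 ∧ (j:ℕ) = 0) then 1
      else if ((i:ℕ) = n - 1 ∧ (j:ℕ) = 1) then -1 else 0 := by
  have hi := i.isLt
  have hj := j.isLt
  rw [Matrix.sub_apply, Matrix.mul_apply, Matrix.mul_apply]
  have hAB : ∑ l, jordanBlock n i l * cornerMatrix n l j
      = if ((i:ℕ) = n - 2 ∧ (j:ℕ) = 0) then 1 else 0 := by
    rcases lt_or_ge ((i:ℕ) + 1) n with h | h
    · rw [Finset.sum_eq_single (⟨(i:ℕ)+1, h⟩ : Fin n)]
      · simp only [jordanBlock, cornerMatrix, Matrix.of_apply]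
        split_ifs <;> first | (exfalso; omega) | norm_num
      · intro b _ hb
        simp only [jordanBlock, Matrix.of_apply]
        rw [if_neg (fun hc => hb (Fin.ext hc.symm)), zero_mul]
      · simp
    · rw [Finset.sum_eq_zero, if_neg (by omega)]
      intro b _
      simp only [jordanBlock, Matrix.of_apply]
      rw [if_neg (by omega), zero_mul]
  have hBA : ∑ l, cornerMatrix n i l * jordanBlock n l j
      = if ((i:ℕ) = n - 1 ∧ (j:ℕ) = 1) then 1 else 0 := by
    rw [Finset.sum_eq_single (⟨0, by omega⟩ : Fin n)]
    · simp only [cornerMatrix, jordanBlock, Matrix.of_apply]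
      split_ifs <;> simp_all <;> omega
    · intro b _ hb
      simp only [cornerMatrix, Matrix.of_apply]
      rw [if_neg (fun hc => hb (Fin.ext hc.2)), zero_mul]
    · simp
  rw [hAB, hBA]
  split_ifs <;> first | (exfalso; omega) | norm_num

theorem stmt_3 (n : ℕ) (hn : 3 ≤ n) :
    (jordanBlock n) ^ (n - 2) *
        (jordanBlock n * cornerMatrix n - cornerMatrix n * jordanBlock n) =
      Matrix.of (fun i j : Fin n =>
        if i = j ∧ (i : ℕ) = 0 then (1:ℂ) else if i = j ∧ (i : ℕ) = 1 then -1 else 0) ∧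
    (1 : ℂ) ∈ spectrum ℂ ((jordanBlock n) ^ (n - 2) *
        (jordanBlock n * cornerMatrix n - cornerMatrix n * jordanBlock n)) ∧
    (-1 : ℂ) ∈ spectrum ℂ ((jordanBlock n) ^ (n - 2) *
        (jordanBlock n * cornerMatrix n - cornerMatrix n * jordanBlock n)) := by
  have heq : (jordanBlock n) ^ (n - 2) *
        (jordanBlock n * cornerMatrix n - cornerMatrix n * jordanBlock n) =
      Matrix.of (fun i j : Fin n =>
        if i = j ∧ (i : ℕ) = 0 then (1:ℂ) else if i = j ∧ (i : ℕ) = 1 then -1 else 0) := by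
    ext i j
    have hi := i.isLt
    have hj := j.isLt
    rw [Matrix.mul_apply]
    rcases lt_or_ge ((i:ℕ) + (n - 2)) n with h | h
    · rw [Finset.sum_eq_single (⟨(i:ℕ)+(n-2), h⟩ : Fin n)]
      · rw [jordanBlock_pow_apply, if_pos rfl, one_mul, comm_apply n hn]
        simp only [Matrix.of_apply, Fin.ext_iff]
        split_ifs <;> first | (exfalso; omega) | norm_num
      · intro b _ hb
        rw [jordanBlock_pow_apply, if_neg (fun hc => hb (Fin.ext hc.symm)), zero_mul]
      · simp
    · rw [Finset.sum_eq_zero]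
      · simp only [Matrix.of_apply, Fin.ext_iff]
        rw [if_neg (by omega), if_neg (by omega)]
      · intro b _
        rw [jordanBlock_pow_apply, if_neg (by omega), zero_mul]
  have hdiag : Matrix.of (fun i j : Fin n =>
        if i = j ∧ (i : ℕ) = 0 then (1:ℂ) else if i = j ∧ (i : ℕ) = 1 then -1 else 0)
      = Matrix.diagonal (fun i : Fin n =>
        if (i : ℕ) = 0 then (1:ℂ) else if (i : ℕ) = 1 then -1 else 0) := by
    ext i j
    rw [Matrix.diagonal_apply, Matrix.of_apply]
    split_ifs <;> simp_all
  refine ⟨heq, ?_, ?_⟩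
  · rw [heq, hdiag, spectrum.mem_iff]
    intro hu
    rw [Matrix.isUnit_iff_isUnit_det, Matrix.algebraMap_eq_diagonal,
      Matrix.diagonal_sub, Matrix.det_diagonal,
      Finset.prod_eq_zero (Finset.mem_univ (⟨0, by omega⟩ : Fin n)) (by simp)] at hu
    exact hu.ne_zero rfl
  · rw [heq, hdiag, spectrum.mem_iff]
    intro hu
    rw [Matrix.isUnit_iff_isUnit_det, Matrix.algebraMap_eq_diagonal,
      Matrix.diagonal_sub, Matrix.det_diagonal,
      Finset.prod_eq_zero (Finset.mem_univ (⟨1, by omega⟩ : Fin n)) (by norm_num)] at hu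
    exact hu.ne_zero rfl
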